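/- There is no pair (e, b) with gcd(e,8)=1 such that the affine map z ↦ ez + b mod 8 is a bijection from the set {0,1,3,4} onto the set {1,2,3,6} (as subsets of ℤ/8ℤ). -/
import Mathlib

set_option maxHeartbeats 4000000 in
lemma aux14 : ∀ e b : ZMod 8,
    ¬ Set.BijOn (fun z : ZMod 8 => e * z + b)
      ({0, 1, 3, 4} : Set (ZMod 8)) ({1, 2, 3, 6} : Set (ZMod 8)) := by
  intro e b h
  fin_cases e <;> fin_cases b <;>
    revert h <;>
    · simp only [Set.BijOn, Set.MapsTo, Set.InjOn, Set.SurjOn, Set.subset_def,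
        Set.mem_insert_iff, Set.mem_singleton_iff, Set.mem_image]
      decide

theorem stmt14 :
    ¬ ∃ e b : ℕ, Nat.gcd e 8 = 1 ∧
      Set.BijOn (fun z : ZMod 8 => (e : ZMod 8) * z + (b : ZMod 8))
        ({0, 1, 3, 4} : Set (ZMod 8)) ({1, 2, 3, 6} : Set (ZMod 8)) := by
  rintro ⟨e, b, -, hbij⟩
  exact aux14 (e : ZMod 8) (b : ZMod 8) hbij
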